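/- arXiv:math/0404390 — 7 statements merged into one kernel-verified Lean document; each statement's English description precedes it below -/
import Mathlib

section
/- Let G be a group generated by g₁,g₂,g₃,g₄ with g₁,g₂ central, g₁g₂ = g₂g₁, and g₃g₄g₃⁻¹g₄⁻¹ = g₂^m for a nonzero integer m, such that every element of G can be written uniquely as g₄^b g₃^a g₂^t g₁^l (a,b,t,l ∈ ℤ). Let σ̃ be an element of an overgroup with σ̃² = 1, σ̃g₁σ̃⁻¹ = g₁, σ̃g₂σ̃⁻¹ = g₂⁻¹, σ̃g₃σ̃⁻¹ = g₃, σ̃g₄σ̃⁻¹ = g₄⁻¹. Then for g = g₄^b g₃^a g₂^t g₁^l one has (σ̃g)² = g₂^{mab} g₃^{2a} g₁^{2l}. In particular (σ̃g)² = 1 if and only if a = 0 and l = 0. -/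
/-!
Since `σ` is an involution, `(σ g)² = (σ g σ⁻¹) g`, and conjugation by `σ` sends the normal form
`g₄^b g₃^a g₂^t g₁^l` to `g₄^(-b) g₃^a g₂^(-t) g₁^l`. The central factors cancel up to `g₁^(2l)`,
and the commutator relation gives `g₄^(-b) g₃^a g₄^b = g₂^(mab) g₃^a`, which yields the formula.
By uniqueness of normal forms, `g₂^(mab) g₃^(2a) g₁^(2l) = 1` forces `a = 0` and `l = 0`.
-/

section

variable {G : Type*} [Group G]

theorem sq_mul_eq_conj_mul {σ g : G} (hσ : σ ^ 2 = 1) : (σ * g) ^ 2 = σ * g * σ⁻¹ * g := by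
  rw [inv_eq_of_mul_eq_one_right (pow_two σ ▸ hσ), sq]
  simp only [mul_assoc]

theorem inv_mul_mul_eq_of_commutator_eq {x y z : G} (hzy : Commute z y)
    (h : x * y * x⁻¹ * y⁻¹ = z) : y⁻¹ * x * y = z * x := by
  calc y⁻¹ * x * y = y⁻¹ * (x * y * x⁻¹ * y⁻¹) * y * x := by group
    _ = z * x := by rw [h, ← hzy.inv_right.eq]; group

theorem zpow_neg_mul_mul_zpow_eq {x y z : G} (hzy : Commute z y) (h : y⁻¹ * x * y = z * x)
    (b : ℤ) : y ^ (-b) * x * y ^ b = z ^ b * x := by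
  have h' : y * x * y⁻¹ = z⁻¹ * x := by
    calc y * x * y⁻¹ = z⁻¹ * (y * z) * x * y⁻¹ := by rw [← hzy.eq]; group
      _ = z⁻¹ * (y * (y⁻¹ * x * y) * y⁻¹) := by rw [h]; group
      _ = z⁻¹ * x := by group
  induction b using Int.induction_on with
  | zero => simp
  | succ k ih =>
    calc y ^ (-(k + 1 : ℤ)) * x * y ^ (k + 1 : ℤ)
        = y⁻¹ * (y ^ (-k : ℤ) * x * y ^ (k : ℤ)) * y := by group
      _ = z ^ (k : ℤ) * (y⁻¹ * x * y) := by
        rw [ih, ← mul_assoc y⁻¹, ← ((hzy.zpow_left k).inv_right).eq]; group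
      _ = z ^ (k + 1 : ℤ) * x := by rw [h]; group
  | pred k ih =>
    calc y ^ (-(-k - 1 : ℤ)) * x * y ^ (-k - 1 : ℤ)
        = y * (y ^ (-(-k) : ℤ) * x * y ^ (-k : ℤ)) * y⁻¹ := by group
      _ = z ^ (-k : ℤ) * (y * x * y⁻¹) := by
        rw [ih, ← mul_assoc y, ← (hzy.zpow_left _).eq]; group
      _ = z ^ (-k - 1 : ℤ) * x := by rw [h']; group

theorem zpow_neg_mul_zpow_mul_zpow_eq {x y z : G} (hzx : Commute z x) (hzy : Commute z y)
    (h : y⁻¹ * x * y = z * x) (a b : ℤ) : y ^ (-b) * x ^ a * y ^ b = z ^ (a * b) * x ^ a := by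
  have hconj : y ^ (-b) * x ^ a * y ^ b = (y ^ (-b) * x * (y ^ (-b))⁻¹) ^ a := by
    rw [conj_zpow, zpow_neg, inv_inv]
  rw [hconj, zpow_neg, inv_inv, ← zpow_neg, zpow_neg_mul_mul_zpow_eq hzy h,
    ((hzx.zpow_left b).mul_zpow a), ← zpow_mul, mul_comm b]

end

namespace Kodaira

variable {G : Type*} [Group G]

theorem conj_normalForm {σ g₁ g₂ g₃ g₄ : G}
    (h1 : σ * g₁ * σ⁻¹ = g₁) (h2 : σ * g₂ * σ⁻¹ = g₂⁻¹)
    (h3 : σ * g₃ * σ⁻¹ = g₃) (h4 : σ * g₄ * σ⁻¹ = g₄⁻¹) (b a t l : ℤ) :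
    σ * (g₄ ^ b * g₃ ^ a * g₂ ^ t * g₁ ^ l) * σ⁻¹ = g₄ ^ (-b) * g₃ ^ a * g₂ ^ (-t) * g₁ ^ l := by
  change MulAut.conj σ _ = _
  simp only [map_mul, map_zpow, MulAut.conj_apply, h1, h2, h3, h4, zpow_neg, inv_zpow]

theorem conj_normalForm_mul_normalForm {g₁ g₂ g₃ g₄ : G} {m : ℤ}
    (hc12 : Commute g₁ g₂) (hc13 : Commute g₁ g₃) (hc14 : Commute g₁ g₄)
    (hc23 : Commute g₂ g₃) (hc24 : Commute g₂ g₄)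
    (hrel : g₃ * g₄ * g₃⁻¹ * g₄⁻¹ = g₂ ^ m) (b a t l : ℤ) :
    g₄ ^ (-b) * g₃ ^ a * g₂ ^ (-t) * g₁ ^ l * (g₄ ^ b * g₃ ^ a * g₂ ^ t * g₁ ^ l)
      = g₂ ^ (m * a * b) * g₃ ^ (2 * a) * g₁ ^ (2 * l) := by
  have hcentral : Commute (g₂ ^ (-t) * g₁ ^ l) (g₄ ^ b * g₃ ^ a) :=
    ((hc24.zpow_zpow (-t) b).mul_right (hc23.zpow_zpow (-t) a)).mul_left
      ((hc14.zpow_zpow l b).mul_right (hc13.zpow_zpow l a))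
  have hconj : g₄ ^ (-b) * g₃ ^ a * g₄ ^ b = (g₂ ^ m) ^ (a * b) * g₃ ^ a :=
    zpow_neg_mul_zpow_mul_zpow_eq (hc23.zpow_left m) (hc24.zpow_left m)
      (inv_mul_mul_eq_of_commutator_eq (hc24.zpow_left m) hrel) a b
  calc g₄ ^ (-b) * g₃ ^ a * g₂ ^ (-t) * g₁ ^ l * (g₄ ^ b * g₃ ^ a * g₂ ^ t * g₁ ^ l)
      = g₄ ^ (-b) * g₃ ^ a * ((g₂ ^ (-t) * g₁ ^ l) * (g₄ ^ b * g₃ ^ a)) * (g₂ ^ t * g₁ ^ l) := by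
        group
    _ = (g₄ ^ (-b) * g₃ ^ a * g₄ ^ b) * g₃ ^ a * (g₂ ^ (-t) * (g₁ ^ l * g₂ ^ t) * g₁ ^ l) := by
        rw [hcentral.eq]; group
    _ = (g₂ ^ m) ^ (a * b) * g₃ ^ a * g₃ ^ a * (g₂ ^ (-t) * (g₂ ^ t * g₁ ^ l) * g₁ ^ l) := by
        rw [hconj, (hc12.zpow_zpow l t).eq]
    _ = g₂ ^ (m * a * b) * g₃ ^ (2 * a) * g₁ ^ (2 * l) := by group

theorem eq_zero_of_zpow_mul_zpow_mul_zpow_eq_one {g₁ g₂ g₃ g₄ : G} (hc23 : Commute g₂ g₃)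
    (huniq : ∀ b a t l b' a' t' l' : ℤ,
      g₄ ^ b * g₃ ^ a * g₂ ^ t * g₁ ^ l = g₄ ^ b' * g₃ ^ a' * g₂ ^ t' * g₁ ^ l' →
      b = b' ∧ a = a' ∧ t = t' ∧ l = l')
    {k a l : ℤ} (h : g₂ ^ k * g₃ ^ a * g₁ ^ l = 1) : k = 0 ∧ a = 0 ∧ l = 0 := by
  have hnf : g₄ ^ (0 : ℤ) * g₃ ^ a * g₂ ^ k * g₁ ^ l
      = g₄ ^ (0 : ℤ) * g₃ ^ (0 : ℤ) * g₂ ^ (0 : ℤ) * g₁ ^ (0 : ℤ) := by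
    simpa only [zpow_zero, one_mul, mul_one, (hc23.zpow_zpow k a).eq] using h
  obtain ⟨-, ha, hk, hl⟩ := huniq _ _ _ _ _ _ _ _ hnf
  exact ⟨hk, ha, hl⟩

end Kodaira

theorem kodaira_sq_case_1A1ai_general {G : Type*} [Group G] (g₁ g₂ g₃ g₄ σ : G)
    (m : ℤ)
    (hc12 : Commute g₁ g₂) (hc13 : Commute g₁ g₃) (hc14 : Commute g₁ g₄)
    (hc23 : Commute g₂ g₃) (hc24 : Commute g₂ g₄)
    (hrel : g₃ * g₄ * g₃⁻¹ * g₄⁻¹ = g₂ ^ m)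
    (huniq : ∀ b a t l b' a' t' l' : ℤ,
      g₄ ^ b * g₃ ^ a * g₂ ^ t * g₁ ^ l = g₄ ^ b' * g₃ ^ a' * g₂ ^ t' * g₁ ^ l' →
      b = b' ∧ a = a' ∧ t = t' ∧ l = l')
    (hσ2 : σ ^ 2 = 1)
    (h1 : σ * g₁ * σ⁻¹ = g₁) (h2 : σ * g₂ * σ⁻¹ = g₂⁻¹)
    (h3 : σ * g₃ * σ⁻¹ = g₃) (h4 : σ * g₄ * σ⁻¹ = g₄⁻¹) :
    ∀ b a t l : ℤ,
      (σ * (g₄ ^ b * g₃ ^ a * g₂ ^ t * g₁ ^ l)) ^ 2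
        = g₂ ^ (m * a * b) * g₃ ^ (2 * a) * g₁ ^ (2 * l) ∧
      ((σ * (g₄ ^ b * g₃ ^ a * g₂ ^ t * g₁ ^ l)) ^ 2 = 1 ↔ a = 0 ∧ l = 0) := by
  intro b a t l
  have hsq : (σ * (g₄ ^ b * g₃ ^ a * g₂ ^ t * g₁ ^ l)) ^ 2
      = g₂ ^ (m * a * b) * g₃ ^ (2 * a) * g₁ ^ (2 * l) := by
    rw [sq_mul_eq_conj_mul hσ2, Kodaira.conj_normalForm h1 h2 h3 h4,
      Kodaira.conj_normalForm_mul_normalForm hc12 hc13 hc14 hc23 hc24 hrel]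
  refine ⟨hsq, fun h => ?_, ?_⟩
  · obtain ⟨-, ha, hl⟩ :=
      Kodaira.eq_zero_of_zpow_mul_zpow_mul_zpow_eq_one hc23 huniq (hsq ▸ h)
    omega
  · rintro ⟨rfl, rfl⟩
    rw [hsq]
    simp

/-- Case 1)A1)(a)(i)': for g = g₄^b g₃^a g₂^t g₁^l one has
(σ̃g)² = g₂^{mab} g₃^{2a} g₁^{2l}, and (σ̃g)² = 1 iff a = 0 and l = 0. -/
theorem kodaira_sq_case_1A1ai {G : Type*} [Group G] (g₁ g₂ g₃ g₄ σ : G)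
    (m : ℤ) (hm : m ≠ 0)
    (hc12 : Commute g₁ g₂) (hc13 : Commute g₁ g₃) (hc14 : Commute g₁ g₄)
    (hc23 : Commute g₂ g₃) (hc24 : Commute g₂ g₄)
    (hrel : g₃ * g₄ * g₃⁻¹ * g₄⁻¹ = g₂ ^ m)
    (huniq : ∀ b a t l b' a' t' l' : ℤ,
      g₄ ^ b * g₃ ^ a * g₂ ^ t * g₁ ^ l = g₄ ^ b' * g₃ ^ a' * g₂ ^ t' * g₁ ^ l' →
      b = b' ∧ a = a' ∧ t = t' ∧ l = l')
    (hσ2 : σ ^ 2 = 1)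
    (h1 : σ * g₁ * σ⁻¹ = g₁) (h2 : σ * g₂ * σ⁻¹ = g₂⁻¹)
    (h3 : σ * g₃ * σ⁻¹ = g₃) (h4 : σ * g₄ * σ⁻¹ = g₄⁻¹) :
    ∀ b a t l : ℤ,
      (σ * (g₄ ^ b * g₃ ^ a * g₂ ^ t * g₁ ^ l)) ^ 2
        = g₂ ^ (m * a * b) * g₃ ^ (2 * a) * g₁ ^ (2 * l) ∧
      ((σ * (g₄ ^ b * g₃ ^ a * g₂ ^ t * g₁ ^ l)) ^ 2 = 1 ↔ a = 0 ∧ l = 0) :=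
  kodaira_sq_case_1A1ai_general g₁ g₂ g₃ g₄ σ m hc12 hc13 hc14 hc23 hc24 hrel huniq hσ2 h1 h2 h3 h4
end

section
/- Let G be as for a Kodaira surface (generators g₁,g₂,g₃,g₄, g₁,g₂ central and commuting, [g₃,g₄] = g₂^m, unique normal form g₄^r g₃^s g₁^l g₂^t), and let σ̃ satisfy σ̃² = g₁, σ̃g₁σ̃⁻¹ = g₁, σ̃g₂σ̃⁻¹ = g₂⁻¹, σ̃g₃σ̃⁻¹ = g₄, σ̃g₄σ̃⁻¹ = g₃. Then for every g = g₄^r g₃^s g₁^l g₂^t ∈ G one has (σ̃g)² = g₄^{s+r} g₃^{s+r} g₂^{m·r(r+s)} g₁^{2l+1}. In particular (σ̃g)² ≠ 1 for all g ∈ G, so the extension 1 → G → ⟨G, σ̃⟩ → ℤ/2 → 1 does not split. -/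
/-!
Words `g₄^r g₃^s g₁^l g₂^t` multiply like elements of a Heisenberg group: since `⁅g₃, g₄⁆ = g₂^m`
is central, `g₃^p g₄^q = g₂^(mpq) g₄^q g₃^p`. Conjugation by `σ̃` swaps `g₃` and `g₄` and inverts
`g₂`, so `(σ̃g)² = (σ̃gσ̃⁻¹) σ̃² g` is a product of three such words; its `g₁`-exponent is
`l + 1 + l`, which is odd, hence nonzero, so by uniqueness of normal forms `(σ̃g)² ≠ 1`.
-/

open scoped commutatorElement

section

variable {G : Type*} [Group G]

theorem commutatorElement_eq_iff_semiconjBy {a b c : G} :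
    ⁅a, b⁆ = c ↔ SemiconjBy a b (c * b) := by
  rw [commutatorElement_def, mul_inv_eq_iff_eq_mul, mul_inv_eq_iff_eq_mul]
  rfl

theorem semiconjBy_mul_iff_semiconjBy_inv_mul {a b c : G} :
    SemiconjBy a b (c * b) ↔ SemiconjBy b a (c⁻¹ * a) := by
  unfold SemiconjBy
  rw [mul_assoc, mul_assoc, eq_inv_mul_iff_mul_eq, eq_comm]

theorem SemiconjBy.zpow_right_of_mul {a b c : G} (h : SemiconjBy a b (c * b))
    (hb : Commute b c) (n : ℤ) : SemiconjBy a (b ^ n) (c ^ n * b ^ n) := by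
  simpa only [hb.symm.mul_zpow] using h.zpow_right n

theorem SemiconjBy.zpow_zpow_of_mul {a b c : G} (h : SemiconjBy a b (c * b))
    (ha : Commute a c) (hb : Commute b c) (p q : ℤ) :
    SemiconjBy (a ^ p) (b ^ q) (c ^ (p * q) * b ^ q) := by
  have hq := semiconjBy_mul_iff_semiconjBy_inv_mul.mp (h.zpow_right_of_mul hb q)
  have hpq := hq.zpow_right_of_mul ((ha.zpow_right q).inv_right) p
  rwa [inv_zpow, ← zpow_mul, mul_comm q p, ← semiconjBy_mul_iff_semiconjBy_inv_mul] at hpq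

theorem commute_sq_of_semiconjBy_swap {σ x y : G} (hx : SemiconjBy σ x y)
    (hy : SemiconjBy σ y x) : Commute (σ ^ 2) x := by
  rw [sq]
  exact hy.mul_left hx

theorem SemiconjBy.mul_sq {σ x y : G} (h : SemiconjBy σ x y) : (σ * x) ^ 2 = y * σ ^ 2 * x := by
  rw [sq, ← mul_assoc, h.eq, sq]
  simp only [mul_assoc]

theorem Commute.of_semiconjBy {σ x y x' y' : G} (h : Commute x y) (hx : SemiconjBy σ x x')
    (hy : SemiconjBy σ y y') : Commute x' y' := by
  rw [← mul_inv_eq_of_eq_mul hx.eq, ← mul_inv_eq_of_eq_mul hy.eq]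
  exact h.conj σ

structure KodairaRelations (g₁ g₂ g₃ g₄ : G) (m : ℤ) : Prop where
  commute₁₂ : Commute g₁ g₂
  commute₁₃ : Commute g₁ g₃
  commute₁₄ : Commute g₁ g₄
  commute₂₃ : Commute g₂ g₃
  commute₂₄ : Commute g₂ g₄
  commutator₃₄ : ⁅g₃, g₄⁆ = g₂ ^ m

def kodairaWord (g₁ g₂ g₃ g₄ : G) (r s l t : ℤ) : G :=
  g₄ ^ r * g₃ ^ s * g₁ ^ l * g₂ ^ t

namespace KodairaRelations

variable {g₁ g₂ g₃ g₄ : G} {m : ℤ}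

theorem zpow_mul_zpow (h : KodairaRelations g₁ g₂ g₃ g₄ m) (p q : ℤ) :
    g₃ ^ p * g₄ ^ q = g₂ ^ (m * p * q) * g₄ ^ q * g₃ ^ p := by
  have := (commutatorElement_eq_iff_semiconjBy.mp h.commutator₃₄).zpow_zpow_of_mul
    (h.commute₂₃.zpow_left m).symm (h.commute₂₄.zpow_left m).symm p q
  rwa [← zpow_mul, ← mul_assoc] at this

theorem kodairaWord_mul (h : KodairaRelations g₁ g₂ g₃ g₄ m) (r s l t r' s' l' t' : ℤ) :
    kodairaWord g₁ g₂ g₃ g₄ r s l t * kodairaWord g₁ g₂ g₃ g₄ r' s' l' t' =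
      kodairaWord g₁ g₂ g₃ g₄ (r + r') (s + s') (l + l') (t + t' + m * s * r') := by
  have h₃₄ (p q : ℤ) (x : G) :
      g₃ ^ p * (g₄ ^ q * x) = g₂ ^ (m * p * q) * (g₄ ^ q * (g₃ ^ p * x)) := by
    simp only [← mul_assoc, h.zpow_mul_zpow]
  have h₂₁ := h.commute₁₂.symm.zpow_zpow
  have h₁₃ := h.commute₁₃.zpow_zpow
  have h₁₄ := h.commute₁₄.zpow_zpow
  have h₂₃ := h.commute₂₃.zpow_zpow
  have h₂₄ := h.commute₂₄.zpow_zpow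
  simp only [kodairaWord, mul_assoc, h₃₄, (h₂₁ _ _).left_comm,
    (h₁₃ _ _).left_comm, (h₁₄ _ _).left_comm, (h₂₃ _ _).left_comm, (h₂₄ _ _).left_comm]
  group

theorem of_semiconjBy {σ : G} (hσ : σ ^ 2 = g₁) (h₂ : SemiconjBy σ g₂ g₂⁻¹)
    (h₃ : SemiconjBy σ g₃ g₄) (h₄ : SemiconjBy σ g₄ g₃) (h₂₃ : Commute g₂ g₃)
    (h₃₄ : ⁅g₃, g₄⁆ = g₂ ^ m) : KodairaRelations g₁ g₂ g₃ g₄ m where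
  commute₁₂ := hσ ▸ commute_sq_of_semiconjBy_swap h₂ (by simpa using h₂.inv_right)
  commute₁₃ := hσ ▸ commute_sq_of_semiconjBy_swap h₃ h₄
  commute₁₄ := hσ ▸ commute_sq_of_semiconjBy_swap h₄ h₃
  commute₂₃ := h₂₃
  commute₂₄ := Commute.inv_left_iff.mp (h₂₃.of_semiconjBy h₂ h₃)
  commutator₃₄ := h₃₄

theorem semiconjBy_kodairaWord (h : KodairaRelations g₁ g₂ g₃ g₄ m) {σ : G} (h₁ : Commute σ g₁)
    (h₂ : SemiconjBy σ g₂ g₂⁻¹) (h₃ : SemiconjBy σ g₃ g₄) (h₄ : SemiconjBy σ g₄ g₃)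
    (r s l t : ℤ) :
    SemiconjBy σ (kodairaWord g₁ g₂ g₃ g₄ r s l t)
      (kodairaWord g₁ g₂ g₃ g₄ s r l (m * r * s - t)) := by
  have hy : g₃ ^ r * g₄ ^ s * g₁ ^ l * g₂⁻¹ ^ t =
      kodairaWord g₁ g₂ g₃ g₄ s r l (m * r * s - t) := by
    have := h.kodairaWord_mul 0 r 0 0 s 0 l (-t)
    simp only [kodairaWord, zpow_zero, one_mul, mul_one, zero_add, add_zero, ← mul_assoc] at this
    rw [inv_zpow', this, neg_add_eq_sub, kodairaWord]
  rw [← hy]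
  exact (((h₄.zpow_right r).mul_right (h₃.zpow_right s)).mul_right
    (h₁.zpow_right l)).mul_right (h₂.zpow_right t)

theorem mul_kodairaWord_sq (h : KodairaRelations g₁ g₂ g₃ g₄ m) {σ : G} (hσ : σ ^ 2 = g₁)
    (h₂ : SemiconjBy σ g₂ g₂⁻¹) (h₃ : SemiconjBy σ g₃ g₄) (h₄ : SemiconjBy σ g₄ g₃)
    (r s l t : ℤ) :
    (σ * kodairaWord g₁ g₂ g₃ g₄ r s l t) ^ 2 =
      kodairaWord g₁ g₂ g₃ g₄ (r + s) (r + s) (2 * l + 1) (m * r * (r + s)) := by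
  have h₁ : Commute σ g₁ := hσ ▸ Commute.self_pow σ 2
  have hσ' : σ ^ 2 = kodairaWord g₁ g₂ g₃ g₄ 0 0 1 0 := by simp [kodairaWord, hσ]
  rw [(h.semiconjBy_kodairaWord h₁ h₂ h₃ h₄ r s l t).mul_sq, hσ', h.kodairaWord_mul,
    h.kodairaWord_mul]
  congr 1 <;> ring

end KodairaRelations

end

theorem kodaira_nonsplit_case_1B''_general {G : Type*} [Group G] (g₁ g₂ g₃ g₄ σ : G)
    (m : ℤ)
    (hc23 : Commute g₂ g₃)
    (hrel : g₃ * g₄ * g₃⁻¹ * g₄⁻¹ = g₂ ^ m)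
    (huniq : ∀ r s l t r' s' l' t' : ℤ,
      g₄ ^ r * g₃ ^ s * g₁ ^ l * g₂ ^ t = g₄ ^ r' * g₃ ^ s' * g₁ ^ l' * g₂ ^ t' →
      r = r' ∧ s = s' ∧ l = l' ∧ t = t')
    (hσ2 : σ ^ 2 = g₁)
    (h2 : σ * g₂ * σ⁻¹ = g₂⁻¹)
    (h3 : σ * g₃ * σ⁻¹ = g₄) (h4 : σ * g₄ * σ⁻¹ = g₃) :
    ∀ r s l t : ℤ,
      (σ * (g₄ ^ r * g₃ ^ s * g₁ ^ l * g₂ ^ t)) ^ 2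
        = g₄ ^ (s + r) * g₃ ^ (s + r) * g₂ ^ (m * r * (r + s)) * g₁ ^ (2 * l + 1) ∧
      (σ * (g₄ ^ r * g₃ ^ s * g₁ ^ l * g₂ ^ t)) ^ 2 ≠ 1 := by
  intro r s l t
  have hσ₂ : SemiconjBy σ g₂ g₂⁻¹ := h2 ▸ SemiconjBy.conj_mk σ g₂
  have hσ₃ : SemiconjBy σ g₃ g₄ := h3 ▸ SemiconjBy.conj_mk σ g₃
  have hσ₄ : SemiconjBy σ g₄ g₃ := h4 ▸ SemiconjBy.conj_mk σ g₄
  have h := KodairaRelations.of_semiconjBy hσ2 hσ₂ hσ₃ hσ₄ hc23 hrel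
  have hsq := h.mul_kodairaWord_sq hσ2 hσ₂ hσ₃ hσ₄ r s l t
  have hform : g₄ ^ (s + r) * g₃ ^ (s + r) * g₂ ^ (m * r * (r + s)) * g₁ ^ (2 * l + 1) =
      kodairaWord g₁ g₂ g₃ g₄ (r + s) (r + s) (2 * l + 1) (m * r * (r + s)) := by
    rw [kodairaWord, mul_assoc _ (g₂ ^ _), (h.commute₁₂.symm.zpow_zpow _ _).eq, ← mul_assoc,
      add_comm s r]
  refine ⟨hsq.trans hform.symm, fun hone => ?_⟩
  have hodd := (huniq _ _ _ _ 0 0 0 0 (by simpa [kodairaWord] using hsq.symm.trans hone)).2.2.1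
  omega

/-- Case 1)B)'': for every g = g₄^r g₃^s g₁^l g₂^t one has
(σ̃g)² = g₄^{s+r} g₃^{s+r} g₂^{mr(r+s)} g₁^{2l+1} ≠ 1, so the orbifold
fundamental group extension does not split. -/
theorem kodaira_nonsplit_case_1B'' {G : Type*} [Group G] (g₁ g₂ g₃ g₄ σ : G)
    (m : ℤ) (hm : m ≠ 0)
    (hc12 : Commute g₁ g₂) (hc13 : Commute g₁ g₃) (hc14 : Commute g₁ g₄)
    (hc23 : Commute g₂ g₃) (hc24 : Commute g₂ g₄)
    (hrel : g₃ * g₄ * g₃⁻¹ * g₄⁻¹ = g₂ ^ m)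
    (huniq : ∀ r s l t r' s' l' t' : ℤ,
      g₄ ^ r * g₃ ^ s * g₁ ^ l * g₂ ^ t = g₄ ^ r' * g₃ ^ s' * g₁ ^ l' * g₂ ^ t' →
      r = r' ∧ s = s' ∧ l = l' ∧ t = t')
    (hσ2 : σ ^ 2 = g₁)
    (h1 : σ * g₁ * σ⁻¹ = g₁) (h2 : σ * g₂ * σ⁻¹ = g₂⁻¹)
    (h3 : σ * g₃ * σ⁻¹ = g₄) (h4 : σ * g₄ * σ⁻¹ = g₃) :
    ∀ r s l t : ℤ,
      (σ * (g₄ ^ r * g₃ ^ s * g₁ ^ l * g₂ ^ t)) ^ 2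
        = g₄ ^ (s + r) * g₃ ^ (s + r) * g₂ ^ (m * r * (r + s)) * g₁ ^ (2 * l + 1) ∧
      (σ * (g₄ ^ r * g₃ ^ s * g₁ ^ l * g₂ ^ t)) ^ 2 ≠ 1 :=
  kodaira_nonsplit_case_1B''_general g₁ g₂ g₃ g₄ σ m hc23 hrel huniq hσ2 h2 h3 h4
end

section
/- Let G be as for a Kodaira surface and let σ̃ satisfy σ̃² = g₁, σ̃g₁σ̃⁻¹ = g₁, σ̃g₂σ̃⁻¹ = g₂⁻¹, σ̃g₃σ̃⁻¹ = g₃g₂, σ̃g₄σ̃⁻¹ = g₄⁻¹. Then for g = g₄^r g₃^s g₁^l g₂^t one has (σ̃g)² = g₃^{2s} g₂^{mrs+s} g₁^{2l+1}, hence (σ̃g)² ≠ 1 for every g ∈ G and the extension 1 → G → ⟨G,σ̃⟩ → ℤ/2 → 1 does not split. -/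
/-!
Conjugation by `σ` sends the normal form `(r, s, l, t)` to `(-r, s, l, s - t)`, and `σ² = g₁` has
normal form `(0, 0, 1, 0)`. Hence `(σ g)² = (σ g σ⁻¹) · σ² · g` is a product of three normal forms,
which the Heisenberg-type multiplication law collapses to `(0, 2s, 2l + 1, mrs + s)`. Its
`g₁`-exponent `2l + 1` is odd, so by uniqueness of normal forms `(σ g)² ≠ 1`.
-/

open scoped commutatorElement

section Commutator

variable {G : Type*} [Group G] {x y z : G}

theorem commutatorElement_zpow_right (hyz : Commute y z) (h : ⁅x, y⁆ = z) (n : ℤ) :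
    ⁅x, y ^ n⁆ = z ^ n := by
  have hconj : x * y * x⁻¹ = z * y := by rw [← h, commutatorElement_def]; group
  rw [commutatorElement_def, ← conj_zpow, hconj, hyz.symm.mul_zpow, mul_inv_cancel_right]

theorem commutatorElement_zpow_zpow (hxz : Commute x z) (hyz : Commute y z) (h : ⁅x, y⁆ = z)
    (a b : ℤ) : ⁅x ^ a, y ^ b⁆ = z ^ (a * b) := by
  have hb : ⁅y ^ b, x⁆ = (z ^ b)⁻¹ := by
    rw [← commutatorElement_zpow_right hyz h, commutatorElement_inv]
  rw [← commutatorElement_inv, commutatorElement_zpow_right (hxz.zpow_right b).inv_right hb,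
    inv_zpow, inv_inv, ← zpow_mul, mul_comm]

theorem zpow_mul_zpow_eq_of_commutatorElement (hxz : Commute x z) (hyz : Commute y z)
    (h : ⁅x, y⁆ = z) (a b : ℤ) : x ^ a * y ^ b = z ^ (a * b) * y ^ b * x ^ a := by
  rw [← commutatorElement_zpow_zpow hxz hyz h, commutatorElement_def]; group

end Commutator

namespace KodairaGroup

variable {G : Type*} [Group G] {g₁ g₂ g₃ g₄ : G}

theorem normalForm_mul {m : ℤ} (hc12 : Commute g₁ g₂) (hc13 : Commute g₁ g₃)
    (hc14 : Commute g₁ g₄) (hc23 : Commute g₂ g₃) (hc24 : Commute g₂ g₄)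
    (hrel : g₃ * g₄ * g₃⁻¹ * g₄⁻¹ = g₂ ^ m) (r s l t r' s' l' t' : ℤ) :
    g₄ ^ r * g₃ ^ s * g₁ ^ l * g₂ ^ t * (g₄ ^ r' * g₃ ^ s' * g₁ ^ l' * g₂ ^ t') =
      g₄ ^ (r + r') * g₃ ^ (s + s') * g₁ ^ (l + l') * g₂ ^ (t + t' + m * s * r') := by
  have hswap : g₃ ^ s * g₄ ^ r' = g₂ ^ (m * s * r') * (g₄ ^ r' * g₃ ^ s) := by
    rw [zpow_mul_zpow_eq_of_commutatorElement ((hc23.zpow_left m).symm) ((hc24.zpow_left m).symm)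
      hrel, ← zpow_mul, ← mul_assoc m, mul_assoc]
  have hcomm : Commute (g₁ ^ l * g₂ ^ t) (g₄ ^ r' * g₃ ^ s') :=
    ((hc14.zpow_zpow l r').mul_right (hc13.zpow_zpow l s')).mul_left
      ((hc24.zpow_zpow t r').mul_right (hc23.zpow_zpow t s'))
  have hz_head : Commute (g₂ ^ (m * s * r')) (g₄ ^ r) := hc24.zpow_zpow _ _
  have hz_tail : Commute (g₂ ^ (m * s * r')) (g₄ ^ (r + r') * g₃ ^ (s + s') * g₁ ^ (l + l')) :=
    ((hc24.zpow_zpow _ _).mul_right (hc23.zpow_zpow _ _)).mul_right (hc12.symm.zpow_zpow _ _)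
  have hcentral : g₁ ^ l * g₂ ^ t * (g₁ ^ l' * g₂ ^ t') = g₁ ^ (l + l') * g₂ ^ (t + t') := by
    rw [mul_assoc, ← mul_assoc (g₂ ^ t), (hc12.zpow_zpow l' t).symm.eq]; group
  calc _ = g₄ ^ r * g₃ ^ s * (g₁ ^ l * g₂ ^ t * (g₄ ^ r' * g₃ ^ s')) * (g₁ ^ l' * g₂ ^ t') := by
        group
    _ = g₄ ^ r * (g₃ ^ s * g₄ ^ r') * g₃ ^ s' * (g₁ ^ (l + l') * g₂ ^ (t + t')) := by
        rw [hcomm.eq, ← hcentral]; group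
    _ = g₂ ^ (m * s * r') * (g₄ ^ (r + r') * g₃ ^ (s + s') * g₁ ^ (l + l')) * g₂ ^ (t + t') := by
        rw [hswap, ← mul_assoc (g₄ ^ r), ← hz_head.eq]; group
    _ = _ := by rw [hz_tail.eq]; group

theorem conj_normalForm (σ : G) (hc12 : Commute g₁ g₂) (hc23 : Commute g₂ g₃)
    (h1 : σ * g₁ * σ⁻¹ = g₁) (h2 : σ * g₂ * σ⁻¹ = g₂⁻¹)
    (h3 : σ * g₃ * σ⁻¹ = g₃ * g₂) (h4 : σ * g₄ * σ⁻¹ = g₄⁻¹) (r s l t : ℤ) :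
    σ * (g₄ ^ r * g₃ ^ s * g₁ ^ l * g₂ ^ t) * σ⁻¹ = g₄ ^ (-r) * g₃ ^ s * g₁ ^ l * g₂ ^ (s - t) := by
  simp only [← MulAut.conj_apply, map_mul, map_zpow]
  simp only [MulAut.conj_apply, h1, h2, h3, h4]
  rw [inv_zpow', inv_zpow', hc23.symm.mul_zpow, ← mul_assoc (g₄ ^ (-r)),
    mul_assoc (g₄ ^ (-r) * g₃ ^ s), (hc12.zpow_zpow l s).symm.eq]
  group

end KodairaGroup

theorem kodaira_nonsplit_case_1A1bi''_general {G : Type*} [Group G] (g₁ g₂ g₃ g₄ σ : G)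
    (m : ℤ)
    (hc12 : Commute g₁ g₂) (hc13 : Commute g₁ g₃) (hc14 : Commute g₁ g₄)
    (hc23 : Commute g₂ g₃) (hc24 : Commute g₂ g₄)
    (hrel : g₃ * g₄ * g₃⁻¹ * g₄⁻¹ = g₂ ^ m)
    (huniq : ∀ r s l t r' s' l' t' : ℤ,
      g₄ ^ r * g₃ ^ s * g₁ ^ l * g₂ ^ t = g₄ ^ r' * g₃ ^ s' * g₁ ^ l' * g₂ ^ t' →
      r = r' ∧ s = s' ∧ l = l' ∧ t = t')
    (hσ2 : σ ^ 2 = g₁)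
    (h1 : σ * g₁ * σ⁻¹ = g₁) (h2 : σ * g₂ * σ⁻¹ = g₂⁻¹)
    (h3 : σ * g₃ * σ⁻¹ = g₃ * g₂) (h4 : σ * g₄ * σ⁻¹ = g₄⁻¹) :
    ∀ r s l t : ℤ,
      (σ * (g₄ ^ r * g₃ ^ s * g₁ ^ l * g₂ ^ t)) ^ 2
        = g₃ ^ (2 * s) * g₂ ^ (m * r * s + s) * g₁ ^ (2 * l + 1) ∧
      (σ * (g₄ ^ r * g₃ ^ s * g₁ ^ l * g₂ ^ t)) ^ 2 ≠ 1 := by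
  intro r s l t
  have hmul := KodairaGroup.normalForm_mul hc12 hc13 hc14 hc23 hc24 hrel
  have hσ2_normalForm : σ ^ 2 = g₄ ^ (0 : ℤ) * g₃ ^ (0 : ℤ) * g₁ ^ (1 : ℤ) * g₂ ^ (0 : ℤ) := by
    simp [hσ2]
  have hsq : (σ * (g₄ ^ r * g₃ ^ s * g₁ ^ l * g₂ ^ t)) ^ 2 =
      g₄ ^ (0 : ℤ) * g₃ ^ (2 * s) * g₁ ^ (2 * l + 1) * g₂ ^ (m * r * s + s) := by
    calc _ = σ * (g₄ ^ r * g₃ ^ s * g₁ ^ l * g₂ ^ t) * σ⁻¹ * σ ^ 2 *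
          (g₄ ^ r * g₃ ^ s * g₁ ^ l * g₂ ^ t) := by rw [sq]; group
      _ = _ := by
        rw [KodairaGroup.conj_normalForm σ hc12 hc23 h1 h2 h3 h4, hσ2_normalForm, hmul, hmul]
        ring_nf
  refine ⟨?_, fun h => ?_⟩
  · rw [hsq, zpow_zero, one_mul, mul_assoc, (hc12.zpow_zpow _ _).eq, ← mul_assoc]
  · have hodd := (huniq 0 (2 * s) (2 * l + 1) (m * r * s + s) 0 0 0 0
      (by rw [← hsq, h]; simp)).2.2.1
    omega

/-- Case 1)A1)(b)(i)'': for g = g₄^r g₃^s g₁^l g₂^t one has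
(σ̃g)² = g₃^{2s} g₂^{mrs+s} g₁^{2l+1} ≠ 1, so the extension does not split. -/
theorem kodaira_nonsplit_case_1A1bi'' {G : Type*} [Group G] (g₁ g₂ g₃ g₄ σ : G)
    (m : ℤ) (hm : m ≠ 0)
    (hc12 : Commute g₁ g₂) (hc13 : Commute g₁ g₃) (hc14 : Commute g₁ g₄)
    (hc23 : Commute g₂ g₃) (hc24 : Commute g₂ g₄)
    (hrel : g₃ * g₄ * g₃⁻¹ * g₄⁻¹ = g₂ ^ m)
    (huniq : ∀ r s l t r' s' l' t' : ℤ,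
      g₄ ^ r * g₃ ^ s * g₁ ^ l * g₂ ^ t = g₄ ^ r' * g₃ ^ s' * g₁ ^ l' * g₂ ^ t' →
      r = r' ∧ s = s' ∧ l = l' ∧ t = t')
    (hσ2 : σ ^ 2 = g₁)
    (h1 : σ * g₁ * σ⁻¹ = g₁) (h2 : σ * g₂ * σ⁻¹ = g₂⁻¹)
    (h3 : σ * g₃ * σ⁻¹ = g₃ * g₂) (h4 : σ * g₄ * σ⁻¹ = g₄⁻¹) :
    ∀ r s l t : ℤ,
      (σ * (g₄ ^ r * g₃ ^ s * g₁ ^ l * g₂ ^ t)) ^ 2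
        = g₃ ^ (2 * s) * g₂ ^ (m * r * s + s) * g₁ ^ (2 * l + 1) ∧
      (σ * (g₄ ^ r * g₃ ^ s * g₁ ^ l * g₂ ^ t)) ^ 2 ≠ 1 :=
  kodaira_nonsplit_case_1A1bi''_general g₁ g₂ g₃ g₄ σ m hc12 hc13 hc14 hc23 hc24 hrel huniq hσ2 h1
    h2 h3 h4
end

section
/- Let Γ₁ = {(x₁, 0, x₂, ε₃x₁) : x₁,x₂ ∈ ℝ} ⊂ ℝ⁴ and let H = {g ∈ G : g(Γ₁) = Γ₁}, where G is the Kodaira group of affine transformations g(x₁,y₁,x₂,y₂) = (x₁+r, y₁+s, rx₁+sy₁+x₂+δ, −sx₁+ry₁+y₂+ε) with translation parts determined by g = g₄^s g₃^r g₁^n g₂^t, with g₃ having translation part (1,0,δ₃,ε₃), g₄ having translation part (0,1,δ₄,ε₄), g₁ translation by (0,0,δ₁,0) with δ₁≠0, g₂ translation by (0,0,0,ε₂) with ε₂≠0. Then H = {g₃^r g₁^n : r,n ∈ ℤ} ≅ ℤ², and hence the quotient Γ₁/H is homeomorphic to a 2-torus S¹ × S¹. -/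
/-!
In the coordinates `(a, b)` on `Γ₁` given by `x₁ = a`, `x₂ = b δ₁ + a² / 2 + (δ₃ - 1/2) a`, the
maps `g₃` and `g₁` become the unit translations in `a` and `b`: the quadratic term absorbs the
`r x₁ + r (r - 1) / 2` that `g₃ ^ r` adds to `x₂`. So `⟨g₃, g₁⟩ ≅ ℤ²` preserves `Γ₁ ≅ ℝ²`, acting by
translations, and `Γ₁ / ⟨g₃, g₁⟩ ≅ ℝ² / ℤ²`. Conversely, `g₄ ^ s g₃ ^ r g₁ ^ n g₂ ^ t` sends the
origin to a point with `y₁ = s` and, once `s = 0`, `y₂ - ε₃ x₁ = t ε₂`; so if it preserves `Γ₁`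
then `s = t = 0`.
-/

theorem Equiv.Perm.zpow_apply_eq_of_succ {α : Type*} (g : Equiv.Perm α) (Φ : ℤ → α → α)
    (h0 : ∀ p, Φ 0 p = p) (hsucc : ∀ k p, g (Φ k p) = Φ (k + 1) p) :
    ∀ n p, (g ^ n) p = Φ n p := by
  intro n p
  induction n using Int.induction_on with
  | zero => simp [h0]
  | succ k ih => rw [← hsucc, ← ih, ← Equiv.Perm.mul_apply, ← zpow_one_add, add_comm]
  | pred k ih =>
    apply g.injective
    rw [← Equiv.Perm.mul_apply, ← zpow_one_add, hsucc, add_sub_cancel, sub_add_cancel, ih]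

theorem AddCircle.coe_eq_coe_iff_exists_int {𝕜 : Type*} [AddCommGroup 𝕜] {p : 𝕜} (a b : 𝕜) :
    (a : AddCircle p) = b ↔ ∃ k : ℤ, a + k • p = b := by
  rw [QuotientAddGroup.eq, AddSubgroup.mem_zmultiples_iff]
  simp only [eq_neg_add_iff_add_eq, add_comm a]

theorem AddCircle.prodMap_coe_eq_iff {𝕜 : Type*} [AddCommGroup 𝕜] {p q : 𝕜} (x y : 𝕜 × 𝕜) :
    Prod.map ((↑) : 𝕜 → AddCircle p) ((↑) : 𝕜 → AddCircle q) x = Prod.map (↑) (↑) y ↔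
      ∃ r n : ℤ, x + (r • p, n • q) = y := by
  simp [Prod.ext_iff, AddCircle.coe_eq_coe_iff_exists_int]

noncomputable section

namespace Kodaira

def IsG₁ (δ₁ : ℝ) (g : Equiv.Perm (ℝ × ℝ × ℝ × ℝ)) : Prop :=
  ∀ p, g p = (p.1, p.2.1, p.2.2.1 + δ₁, p.2.2.2)

def IsG₂ (ε₂ : ℝ) (g : Equiv.Perm (ℝ × ℝ × ℝ × ℝ)) : Prop :=
  ∀ p, g p = (p.1, p.2.1, p.2.2.1, p.2.2.2 + ε₂)

def IsG₃ (δ₃ ε₃ : ℝ) (g : Equiv.Perm (ℝ × ℝ × ℝ × ℝ)) : Prop :=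
  ∀ p, g p = (p.1 + 1, p.2.1, p.1 + p.2.2.1 + δ₃, p.2.1 + p.2.2.2 + ε₃)

def IsG₄ (δ₄ ε₄ : ℝ) (g : Equiv.Perm (ℝ × ℝ × ℝ × ℝ)) : Prop :=
  ∀ p, g p = (p.1, p.2.1 + 1, p.2.1 + p.2.2.1 + δ₄, -p.1 + p.2.2.2 + ε₄)

variable {δ₁ ε₂ δ₃ ε₃ δ₄ ε₄ : ℝ} {g₁ g₂ g₃ g₄ : Equiv.Perm (ℝ × ℝ × ℝ × ℝ)}

theorem zpow_g₁_apply (hg₁ : IsG₁ δ₁ g₁) :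
    ∀ (n : ℤ) (p : ℝ × ℝ × ℝ × ℝ), (g₁ ^ n) p = (p.1, p.2.1, p.2.2.1 + n * δ₁, p.2.2.2) :=
  g₁.zpow_apply_eq_of_succ _ (fun _ => by simp) (fun k p => by rw [hg₁]; push_cast; ring_nf)

theorem zpow_g₂_apply (hg₂ : IsG₂ ε₂ g₂) :
    ∀ (t : ℤ) (p : ℝ × ℝ × ℝ × ℝ), (g₂ ^ t) p = (p.1, p.2.1, p.2.2.1, p.2.2.2 + t * ε₂) :=
  g₂.zpow_apply_eq_of_succ _ (fun _ => by simp) (fun k p => by rw [hg₂]; push_cast; ring_nf)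

theorem zpow_g₃_apply (hg₃ : IsG₃ δ₃ ε₃ g₃) :
    ∀ (r : ℤ) (p : ℝ × ℝ × ℝ × ℝ), (g₃ ^ r) p =
      (p.1 + r, p.2.1, p.2.2.1 + r * p.1 + r * (r - 1) / 2 + r * δ₃,
        p.2.2.2 + r * p.2.1 + r * ε₃) :=
  g₃.zpow_apply_eq_of_succ _ (fun _ => by simp) (fun k p => by rw [hg₃]; push_cast; ring_nf)

theorem zpow_g₄_apply (hg₄ : IsG₄ δ₄ ε₄ g₄) :
    ∀ (s : ℤ) (p : ℝ × ℝ × ℝ × ℝ), (g₄ ^ s) p =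
      (p.1, p.2.1 + s, p.2.2.1 + s * p.2.1 + s * (s - 1) / 2 + s * δ₄,
        p.2.2.2 - s * p.1 + s * ε₄) :=
  g₄.zpow_apply_eq_of_succ _ (fun _ => by simp) (fun k p => by rw [hg₄]; push_cast; ring_nf)

def plane (ε₃ : ℝ) : Set (ℝ × ℝ × ℝ × ℝ) := {p | ∃ x₁ x₂ : ℝ, p = (x₁, 0, x₂, ε₃ * x₁)}

def chart (δ₁ δ₃ ε₃ : ℝ) (a : ℝ × ℝ) : ℝ × ℝ × ℝ × ℝ :=
  (a.1, 0, a.2 * δ₁ + a.1 ^ 2 / 2 + (δ₃ - 1 / 2) * a.1, ε₃ * a.1)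

def chartInv (δ₁ δ₃ : ℝ) (p : ℝ × ℝ × ℝ × ℝ) : ℝ × ℝ :=
  (p.1, (p.2.2.1 - p.1 ^ 2 / 2 - (δ₃ - 1 / 2) * p.1) / δ₁)

theorem chart_mem_plane (a : ℝ × ℝ) : chart δ₁ δ₃ ε₃ a ∈ plane ε₃ := ⟨_, _, rfl⟩

theorem chartInv_chart (hδ₁ : δ₁ ≠ 0) (a : ℝ × ℝ) : chartInv δ₁ δ₃ (chart δ₁ δ₃ ε₃ a) = a := by
  ext
  · rfl
  · simp only [chartInv, chart]
    rw [show a.2 * δ₁ + a.1 ^ 2 / 2 + (δ₃ - 1 / 2) * a.1 - a.1 ^ 2 / 2 - (δ₃ - 1 / 2) * a.1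
      = a.2 * δ₁ by ring]
    exact mul_div_cancel_right₀ _ hδ₁

theorem chart_chartInv (hδ₁ : δ₁ ≠ 0) {p : ℝ × ℝ × ℝ × ℝ} (hp : p ∈ plane ε₃) :
    chart δ₁ δ₃ ε₃ (chartInv δ₁ δ₃ p) = p := by
  obtain ⟨x₁, x₂, rfl⟩ := hp
  simp only [chart, chartInv, Prod.mk.injEq, true_and, and_true]
  rw [div_mul_cancel₀ _ hδ₁]
  ring

theorem range_chart (hδ₁ : δ₁ ≠ 0) : Set.range (chart δ₁ δ₃ ε₃) = plane ε₃ :=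
  Set.Subset.antisymm (Set.range_subset_iff.2 chart_mem_plane)
    fun _ hp => ⟨_, chart_chartInv hδ₁ hp⟩

theorem chart_injective (hδ₁ : δ₁ ≠ 0) : Function.Injective (chart δ₁ δ₃ ε₃) :=
  Function.LeftInverse.injective (chartInv_chart hδ₁)

def planeHomeomorph (δ₃ : ℝ) (hδ₁ : δ₁ ≠ 0) : plane ε₃ ≃ₜ ℝ × ℝ where
  toFun p := chartInv δ₁ δ₃ p
  invFun a := ⟨chart δ₁ δ₃ ε₃ a, chart_mem_plane a⟩
  left_inv p := Subtype.ext (chart_chartInv hδ₁ p.2)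
  right_inv := chartInv_chart hδ₁
  continuous_toFun := by unfold chartInv; fun_prop
  continuous_invFun := by unfold chart; fun_prop

theorem zpow_g₃_mul_zpow_g₁_apply_chart (hg₁ : IsG₁ δ₁ g₁) (hg₃ : IsG₃ δ₃ ε₃ g₃) (r n : ℤ)
    (a : ℝ × ℝ) :
    (g₃ ^ r * g₁ ^ n) (chart δ₁ δ₃ ε₃ a) = chart δ₁ δ₃ ε₃ (a + ((r : ℝ), (n : ℝ))) := by
  simp only [Equiv.Perm.mul_apply, zpow_g₁_apply hg₁, zpow_g₃_apply hg₃, chart, Prod.fst_add,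
    Prod.snd_add, Prod.mk.injEq, true_and]
  constructor <;> ring

theorem image_plane (hδ₁ : δ₁ ≠ 0) (hg₁ : IsG₁ δ₁ g₁) (hg₃ : IsG₃ δ₃ ε₃ g₃) (r n : ℤ) :
    ⇑(g₃ ^ r * g₁ ^ n) '' plane ε₃ = plane ε₃ := by
  have hconj :
      ⇑(g₃ ^ r * g₁ ^ n) ∘ chart δ₁ δ₃ ε₃ = chart δ₁ δ₃ ε₃ ∘ (· + ((r : ℝ), (n : ℝ))) :=
    funext (zpow_g₃_mul_zpow_g₁_apply_chart hg₁ hg₃ r n)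
  rw [← range_chart (δ₃ := δ₃) hδ₁, ← Set.range_comp, hconj, (add_right_surjective _).range_comp]

theorem zero_mem_plane : (0 : ℝ × ℝ × ℝ × ℝ) ∈ plane ε₃ := ⟨0, 0, by rw [mul_zero]; rfl⟩

theorem eq_zero_of_apply_zero_mem_plane (hε₂ : ε₂ ≠ 0)
    (hg₁ : IsG₁ δ₁ g₁) (hg₂ : IsG₂ ε₂ g₂) (hg₃ : IsG₃ δ₃ ε₃ g₃) (hg₄ : IsG₄ δ₄ ε₄ g₄)
    {r s n t : ℤ} (h : (g₄ ^ s * g₃ ^ r * g₁ ^ n * g₂ ^ t) 0 ∈ plane ε₃) : s = 0 ∧ t = 0 := by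
  obtain ⟨x₁, x₂, h⟩ := h
  simp only [Equiv.Perm.mul_apply, zpow_g₁_apply hg₁, zpow_g₂_apply hg₂, zpow_g₃_apply hg₃,
    zpow_g₄_apply hg₄, Prod.fst_zero, Prod.snd_zero, Prod.mk.injEq, zero_add, mul_zero,
    add_zero, Int.cast_eq_zero] at h
  obtain ⟨rfl, rfl, -, h⟩ := h
  have ht : (t : ℝ) * ε₂ = 0 := by linear_combination h
  exact ⟨rfl, by exact_mod_cast (mul_eq_zero.1 ht).resolve_right hε₂⟩

theorem zpow_g₃_mul_zpow_g₁_injective (hδ₁ : δ₁ ≠ 0)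
    (hg₁ : IsG₁ δ₁ g₁) (hg₃ : IsG₃ δ₃ ε₃ g₃) :
    Function.Injective (fun rn : ℤ × ℤ => g₃ ^ rn.1 * g₁ ^ rn.2) := by
  rintro ⟨r, n⟩ ⟨r', n'⟩ h
  have h₀ := congrArg (fun g : Equiv.Perm _ => g (chart δ₁ δ₃ ε₃ 0)) h
  simp only [zpow_g₃_mul_zpow_g₁_apply_chart hg₁ hg₃, zero_add] at h₀
  simpa using chart_injective hδ₁ h₀

theorem exists_zpow_g₃_mul_zpow_g₁_apply_eq_iff (hδ₁ : δ₁ ≠ 0)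
    (hg₁ : IsG₁ δ₁ g₁) (hg₃ : IsG₃ δ₃ ε₃ g₃) (p q : plane ε₃) :
    (∃ r n : ℤ, (g₃ ^ r * g₁ ^ n) p.val = q.val) ↔
      ∃ r n : ℤ, planeHomeomorph δ₃ hδ₁ p + ((r : ℝ), (n : ℝ)) = planeHomeomorph δ₃ hδ₁ q := by
  refine exists₂_congr fun r n => ?_
  conv_lhs => rw [← chart_chartInv (δ₃ := δ₃) hδ₁ p.2, ← chart_chartInv (δ₃ := δ₃) hδ₁ q.2]
  rw [zpow_g₃_mul_zpow_g₁_apply_chart hg₁ hg₃, (chart_injective hδ₁).eq_iff]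
  rfl

end Kodaira

end

open Kodaira in
/-- The stabilizer in the Kodaira group G of the fixed plane Γ₁ = {(x₁,0,x₂,ε₃x₁)}
consists exactly of the elements g₃^r g₁^n, is free abelian of rank 2, and the
quotient Γ₁/H is homeomorphic to a 2-torus. -/
theorem kodaira_real_component_is_torus
    (δ₁ ε₂ δ₃ ε₃ δ₄ ε₄ : ℝ) (hδ₁ : δ₁ ≠ 0) (hε₂ : ε₂ ≠ 0)
    (g₁ g₂ g₃ g₄ : Equiv.Perm (ℝ × ℝ × ℝ × ℝ))
    (hg₁ : ∀ p : ℝ × ℝ × ℝ × ℝ, g₁ p = (p.1, p.2.1, p.2.2.1 + δ₁, p.2.2.2))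
    (hg₂ : ∀ p : ℝ × ℝ × ℝ × ℝ, g₂ p = (p.1, p.2.1, p.2.2.1, p.2.2.2 + ε₂))
    (hg₃ : ∀ p : ℝ × ℝ × ℝ × ℝ,
      g₃ p = (p.1 + 1, p.2.1, p.1 + p.2.2.1 + δ₃, p.2.1 + p.2.2.2 + ε₃))
    (hg₄ : ∀ p : ℝ × ℝ × ℝ × ℝ,
      g₄ p = (p.1, p.2.1 + 1, p.2.1 + p.2.2.1 + δ₄, -p.1 + p.2.2.2 + ε₄)) :
    (∀ r s n t : ℤ,
      (⇑(g₄ ^ s * g₃ ^ r * g₁ ^ n * g₂ ^ t)) ''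
          {p : ℝ × ℝ × ℝ × ℝ | ∃ x₁ x₂ : ℝ, p = (x₁, 0, x₂, ε₃ * x₁)}
        = {p : ℝ × ℝ × ℝ × ℝ | ∃ x₁ x₂ : ℝ, p = (x₁, 0, x₂, ε₃ * x₁)}
      ↔ s = 0 ∧ t = 0) ∧
    Function.Injective (fun rn : ℤ × ℤ => g₃ ^ rn.1 * g₁ ^ rn.2) ∧
    Nonempty
      ((Quot fun p q : {p : ℝ × ℝ × ℝ × ℝ // ∃ x₁ x₂ : ℝ, p = (x₁, 0, x₂, ε₃ * x₁)} =>
          ∃ r n : ℤ, (g₃ ^ r * g₁ ^ n) p.val = q.val)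
        ≃ₜ AddCircle (1 : ℝ) × AddCircle (1 : ℝ)) := by
  refine ⟨fun r s n t => ⟨fun h => ?_, ?_⟩, zpow_g₃_mul_zpow_g₁_injective hδ₁ hg₁ hg₃, ?_⟩
  · exact eq_zero_of_apply_zero_mem_plane hε₂ hg₁ hg₂ hg₃ hg₄
      (h.subset (Set.mem_image_of_mem _ zero_mem_plane))
  · rintro ⟨rfl, rfl⟩
    rw [zpow_zero, zpow_zero, one_mul, mul_one]
    exact image_plane hδ₁ hg₁ hg₃ r n
  · let π : C(plane ε₃, AddCircle (1 : ℝ) × AddCircle (1 : ℝ)) :=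
      ⟨Prod.map (↑) (↑) ∘ planeHomeomorph δ₃ hδ₁, by fun_prop⟩
    have hπ : Topology.IsQuotientMap π :=
      (QuotientAddGroup.isOpenQuotientMap_mk.prodMap
        QuotientAddGroup.isOpenQuotientMap_mk).isQuotientMap.comp
        (planeHomeomorph δ₃ hδ₁).isQuotientMap
    refine ⟨(Homeomorph.Quot.congrRight (r' := (Setoid.ker π).r) fun p q => ?_).trans
      hπ.homeomorph⟩
    rw [exists_zpow_g₃_mul_zpow_g₁_apply_eq_iff hδ₁ hg₁ hg₃, Setoid.ker_def]
    simp [π, AddCircle.prodMap_coe_eq_iff]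
end

section
/- With G and σ̃ as in case 1)A1)(a)(i)' acting on ℝ⁴ (σ̃ fixing Γ₁ = {y₁=0, y₂=ε₃x₁} and Γ₂ = {y₁=0, y₂=ε₃x₁+ε₂/2}, where ε₂ = 2/m ≠ 0), there is no g ∈ G with g(Γ₁) = Γ₂. Hence Γ₁ and Γ₂ descend to two distinct connected components of the real part S(ℝ). -/
/-!
Every element of `G` sends the origin, a point of `Γ₁`, to a point `(r, s, *, t ε₂ + r ε₃ - r s + s ε₄)`.
For it to lie on `Γ₂` we need `s = 0` and then `t ε₂ = ε₂ / 2`, impossible for an integer `t` as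
`ε₂ ≠ 0`.
-/

theorem Equiv.Perm.zpow_apply_eq_of_step {α : Type*} (g : Equiv.Perm α) (F : ℤ → α → α)
    (h_zero : ∀ p, F 0 p = p) (h_step : ∀ k p, g (F k p) = F (k + 1) p) (k : ℤ) (p : α) :
    (g ^ k) p = F k p := by
  induction k using Int.induction_on with
  | zero => simp [h_zero]
  | succ k ih => rw [← h_step, ← ih, ← Equiv.Perm.mul_apply, ← zpow_one_add, add_comm]
  | pred k ih =>
    apply g.injective
    rw [h_step, sub_add_cancel, ← Equiv.Perm.mul_apply, ← zpow_one_add, add_sub_cancel, ih]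

section Generators

variable {g : Equiv.Perm (ℝ × ℝ × ℝ × ℝ)} {n : ℤ} {x y z w : ℝ}

theorem zpow_apply_of_translate_third {δ : ℝ}
    (hg : ∀ p : ℝ × ℝ × ℝ × ℝ, g p = (p.1, p.2.1, p.2.2.1 + δ, p.2.2.2)) :
    (g ^ n) (x, y, z, w) = (x, y, z + n * δ, w) :=
  g.zpow_apply_eq_of_step (fun k p => (p.1, p.2.1, p.2.2.1 + k * δ, p.2.2.2))
    (fun _ => by simp) (fun k p => by rw [hg]; push_cast; ring_nf) n _

theorem zpow_apply_of_translate_fourth {ε : ℝ}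
    (hg : ∀ p : ℝ × ℝ × ℝ × ℝ, g p = (p.1, p.2.1, p.2.2.1, p.2.2.2 + ε)) :
    (g ^ n) (x, y, z, w) = (x, y, z, w + n * ε) :=
  g.zpow_apply_eq_of_step (fun k p => (p.1, p.2.1, p.2.2.1, p.2.2.2 + k * ε))
    (fun _ => by simp) (fun k p => by rw [hg]; push_cast; ring_nf) n _

theorem zpow_apply_of_shear_first {δ ε : ℝ}
    (hg : ∀ p : ℝ × ℝ × ℝ × ℝ, g p = (p.1 + 1, p.2.1, p.1 + p.2.2.1 + δ, p.2.1 + p.2.2.2 + ε)) :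
    (g ^ n) (x, y, z, w) =
      (x + n, y, z + n * x + n * (n - 1) / 2 + n * δ, w + n * y + n * ε) :=
  g.zpow_apply_eq_of_step
    (fun k p => (p.1 + k, p.2.1, p.2.2.1 + k * p.1 + k * (k - 1) / 2 + k * δ,
      p.2.2.2 + k * p.2.1 + k * ε))
    (fun _ => by simp) (fun k p => by rw [hg]; push_cast; ring_nf) n _

theorem zpow_apply_of_shear_second {δ ε : ℝ}
    (hg : ∀ p : ℝ × ℝ × ℝ × ℝ, g p = (p.1, p.2.1 + 1, p.2.1 + p.2.2.1 + δ, -p.1 + p.2.2.2 + ε)) :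
    (g ^ n) (x, y, z, w) =
      (x, y + n, z + n * y + n * (n - 1) / 2 + n * δ, w - n * x + n * ε) :=
  g.zpow_apply_eq_of_step
    (fun k p => (p.1, p.2.1 + k, p.2.2.1 + k * p.2.1 + k * (k - 1) / 2 + k * δ,
      p.2.2.2 - k * p.1 + k * ε))
    (fun _ => by simp) (fun k p => by rw [hg]; push_cast; ring_nf) n _

end Generators

theorem int_mul_ne_half {ε : ℝ} (hε : ε ≠ 0) (t : ℤ) : (t : ℝ) * ε ≠ ε / 2 := by
  intro h
  have h2t : ((2 * t : ℤ) : ℝ) = 1 := by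
    push_cast
    linarith [mul_right_cancel₀ hε (h.trans (by ring) : (t : ℝ) * ε = 1 / 2 * ε)]
  have : 2 * t = 1 := by exact_mod_cast h2t
  omega

theorem kodaira_components_distinct_general
    (m : ℤ) (hm : m ≠ 0) (δ₁ ε₂ δ₃ ε₃ δ₄ ε₄ : ℝ)
    (hε₂ : ε₂ = 2 / (m : ℝ))
    (g₁ g₂ g₃ g₄ : Equiv.Perm (ℝ × ℝ × ℝ × ℝ))
    (hg₁ : ∀ p : ℝ × ℝ × ℝ × ℝ, g₁ p = (p.1, p.2.1, p.2.2.1 + δ₁, p.2.2.2))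
    (hg₂ : ∀ p : ℝ × ℝ × ℝ × ℝ, g₂ p = (p.1, p.2.1, p.2.2.1, p.2.2.2 + ε₂))
    (hg₃ : ∀ p : ℝ × ℝ × ℝ × ℝ,
      g₃ p = (p.1 + 1, p.2.1, p.1 + p.2.2.1 + δ₃, p.2.1 + p.2.2.2 + ε₃))
    (hg₄ : ∀ p : ℝ × ℝ × ℝ × ℝ,
      g₄ p = (p.1, p.2.1 + 1, p.2.1 + p.2.2.1 + δ₄, -p.1 + p.2.2.2 + ε₄)) :
    ∀ r s n t : ℤ,
      (⇑(g₄ ^ s * g₃ ^ r * g₁ ^ n * g₂ ^ t)) ''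
          {p : ℝ × ℝ × ℝ × ℝ | ∃ x₁ x₂ : ℝ, p = (x₁, 0, x₂, ε₃ * x₁)}
        ≠ {p : ℝ × ℝ × ℝ × ℝ | ∃ x₁ x₂ : ℝ, p = (x₁, 0, x₂, ε₃ * x₁ + ε₂ / 2)} := by
  intro r s n t h
  have hε₂_ne : ε₂ ≠ 0 := hε₂ ▸ div_ne_zero two_ne_zero (Int.cast_ne_zero.mpr hm)
  have h_origin : (g₄ ^ s * g₃ ^ r * g₁ ^ n * g₂ ^ t) (0, 0, 0, 0) ∈
      {p : ℝ × ℝ × ℝ × ℝ | ∃ x₁ x₂ : ℝ, p = (x₁, 0, x₂, ε₃ * x₁ + ε₂ / 2)} :=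
    h ▸ Set.mem_image_of_mem _ ⟨0, 0, by simp⟩
  simp only [Equiv.Perm.mul_apply, zpow_apply_of_translate_fourth hg₂,
    zpow_apply_of_translate_third hg₁, zpow_apply_of_shear_first hg₃,
    zpow_apply_of_shear_second hg₄, Set.mem_ofPred_eq, Prod.mk.injEq] at h_origin
  obtain ⟨x₁, x₂, hx, hy, -, hw⟩ := h_origin
  have hs : s = 0 := by exact_mod_cast (by linarith : (s : ℝ) = 0)
  subst hs
  exact int_mul_ne_half hε₂_ne t (by push_cast at hw hx; linear_combination hw - ε₃ * hx)

/-- No element of the Kodaira group maps Γ₁ = {(x₁,0,x₂,ε₃x₁)} onto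
Γ₂ = {(x₁,0,x₂,ε₃x₁+ε₂/2)}: they descend to distinct components of S(ℝ). -/
theorem kodaira_components_distinct
    (m : ℤ) (hm : m ≠ 0) (δ₁ ε₂ δ₃ ε₃ δ₄ ε₄ : ℝ) (hδ₁ : δ₁ ≠ 0)
    (hε₂ : ε₂ = 2 / (m : ℝ))
    (g₁ g₂ g₃ g₄ : Equiv.Perm (ℝ × ℝ × ℝ × ℝ))
    (hg₁ : ∀ p : ℝ × ℝ × ℝ × ℝ, g₁ p = (p.1, p.2.1, p.2.2.1 + δ₁, p.2.2.2))
    (hg₂ : ∀ p : ℝ × ℝ × ℝ × ℝ, g₂ p = (p.1, p.2.1, p.2.2.1, p.2.2.2 + ε₂))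
    (hg₃ : ∀ p : ℝ × ℝ × ℝ × ℝ,
      g₃ p = (p.1 + 1, p.2.1, p.1 + p.2.2.1 + δ₃, p.2.1 + p.2.2.2 + ε₃))
    (hg₄ : ∀ p : ℝ × ℝ × ℝ × ℝ,
      g₄ p = (p.1, p.2.1 + 1, p.2.1 + p.2.2.1 + δ₄, -p.1 + p.2.2.2 + ε₄)) :
    ∀ r s n t : ℤ,
      (⇑(g₄ ^ s * g₃ ^ r * g₁ ^ n * g₂ ^ t)) ''
          {p : ℝ × ℝ × ℝ × ℝ | ∃ x₁ x₂ : ℝ, p = (x₁, 0, x₂, ε₃ * x₁)}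
        ≠ {p : ℝ × ℝ × ℝ × ℝ | ∃ x₁ x₂ : ℝ, p = (x₁, 0, x₂, ε₃ * x₁ + ε₂ / 2)} :=
  kodaira_components_distinct_general m hm δ₁ ε₂ δ₃ ε₃ δ₄ ε₄ hε₂ g₁ g₂ g₃ g₄ hg₁ hg₂ hg₃ hg₄
end

section
/- Let m be a nonzero integer, ε₂ = 2/m, and consider the planes Λ₁ = {(x₁,−1/2,x₂,(ε₃+1/2)x₁−ε₄/2)} and Λ₂ = {(x₁,−1/2,x₂,(ε₃+1/2)x₁−ε₄/2+ε₂/2)} in ℝ⁴, with G the Kodaira group as in case 1)A1)(a)(i)'. A g ∈ G with g(Λ₁) = Λ₂ exists if and only if the equation 2n − 1 = m·r has an integer solution (n,r), i.e. if and only if m is odd. Consequently S(ℝ) has 4 connected components (tori) when m is even and 3 when m is odd. -/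
/-!
An element `g₄ ^ s * g₃ ^ r * g₁ ^ n * g₂ ^ t` shifts the second coordinate by `s`, so it can
map `Λ₁` (second coordinate `-1/2`) into `Λ₂` only if `s = 0`. The planes
`Λ_c = {(x₁, -1/2, x₂, (ε₃ + 1/2) x₁ - ε₄/2 + c)}` are then permuted by `Λ_c ↦ Λ_(c + t ε₂ - r)`,
so `g(Λ₁) = Λ₂` is solvable iff `t ε₂ - r = ε₂ / 2` for some integers `t, r`, i.e. `2t - 1 = m r`.
Its left side is odd, which forces `m` to be odd; conversely `m = 2k + 1` admits `t = k + 1, r = 1`.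
-/

open Equiv

local notation "ℝ⁴" => ℝ × ℝ × ℝ × ℝ

lemma Equiv.Perm.zpow_apply_eq_of_succ_s15 {α : Type*} (g : Perm α) (F : ℤ → α → α)
    (h_zero : ∀ p, F 0 p = p) (h_succ : ∀ k p, F (k + 1) p = g (F k p)) (k : ℤ) (p : α) :
    (g ^ k) p = F k p := by
  induction k using Int.induction_on with
  | zero => simp [h_zero]
  | succ k ih => rw [add_comm, zpow_one_add, Perm.mul_apply, ih, add_comm, h_succ]
  | pred k ih =>
    apply g.injective
    rw [← Perm.mul_apply, ← zpow_one_add, add_sub_cancel, ih, ← h_succ, sub_add_cancel]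

structure IsKodairaGenerators (δ₁ ε₂ δ₃ ε₃ δ₄ ε₄ : ℝ) (g₁ g₂ g₃ g₄ : Perm ℝ⁴) : Prop where
  apply₁ : ∀ p : ℝ⁴, g₁ p = (p.1, p.2.1, p.2.2.1 + δ₁, p.2.2.2)
  apply₂ : ∀ p : ℝ⁴, g₂ p = (p.1, p.2.1, p.2.2.1, p.2.2.2 + ε₂)
  apply₃ : ∀ p : ℝ⁴, g₃ p = (p.1 + 1, p.2.1, p.1 + p.2.2.1 + δ₃, p.2.1 + p.2.2.2 + ε₃)
  apply₄ : ∀ p : ℝ⁴, g₄ p = (p.1, p.2.1 + 1, p.2.1 + p.2.2.1 + δ₄, -p.1 + p.2.2.2 + ε₄)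

section KodairaGroup

variable {δ₁ ε₂ δ₃ ε₃ δ₄ ε₄ : ℝ} {g₁ g₂ g₃ g₄ : Perm ℝ⁴}

lemma kodaira_element_apply
    (hg : IsKodairaGenerators δ₁ ε₂ δ₃ ε₃ δ₄ ε₄ g₁ g₂ g₃ g₄)
    (r s n t : ℤ) (p : ℝ⁴) :
    (g₄ ^ s * g₃ ^ r * g₁ ^ n * g₂ ^ t) p =
      (p.1 + r, p.2.1 + s,
        p.2.2.1 + n * δ₁ + r * p.1 + r * (r - 1) / 2 + r * δ₃
          + s * p.2.1 + s * (s - 1) / 2 + s * δ₄,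
        p.2.2.2 + t * ε₂ + r * p.2.1 + r * ε₃ - s * (p.1 + r) + s * ε₄) := by
  have h₁ := g₁.zpow_apply_eq_of_succ_s15 (fun k p => (p.1, p.2.1, p.2.2.1 + k * δ₁, p.2.2.2))
    (by simp) (fun k p => by simp [hg.apply₁]; ring)
  have h₂ := g₂.zpow_apply_eq_of_succ_s15 (fun k p => (p.1, p.2.1, p.2.2.1, p.2.2.2 + k * ε₂))
    (by simp) (fun k p => by simp [hg.apply₂]; ring)
  have h₃ := g₃.zpow_apply_eq_of_succ_s15
    (fun k p => (p.1 + k, p.2.1, p.2.2.1 + k * p.1 + k * (k - 1) / 2 + k * δ₃,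
      p.2.2.2 + k * p.2.1 + k * ε₃))
    (by simp) (fun k p => by simp [hg.apply₃]; refine ⟨?_, ?_, ?_⟩ <;> ring)
  have h₄ := g₄.zpow_apply_eq_of_succ_s15
    (fun k p => (p.1, p.2.1 + k, p.2.2.1 + k * p.2.1 + k * (k - 1) / 2 + k * δ₄,
      p.2.2.2 - k * p.1 + k * ε₄))
    (by simp) (fun k p => by simp [hg.apply₄]; refine ⟨?_, ?_, ?_⟩ <;> ring)
  simp only [Perm.mul_apply, h₁, h₂, h₃, h₄]

/-- `Λ₁` is `kodairaPlane ε₃ ε₄ 0` and `Λ₂` is `kodairaPlane ε₃ ε₄ (ε₂ / 2)`. -/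
def kodairaPlane (ε₃ ε₄ c : ℝ) : Set ℝ⁴ :=
  {p | ∃ x₁ x₂ : ℝ, p = (x₁, -(1 / 2), x₂, (ε₃ + 1 / 2) * x₁ - ε₄ / 2 + c)}

lemma kodairaPlane_zero :
    kodairaPlane ε₃ ε₄ 0 = {p | ∃ x₁ x₂ : ℝ, p = (x₁, -(1 / 2), x₂, (ε₃ + 1 / 2) * x₁ - ε₄ / 2)} := by
  simp only [kodairaPlane, add_zero]

lemma kodairaPlane_injective : Function.Injective (kodairaPlane ε₃ ε₄) := by
  intro c c' h
  have hmem : ((0 : ℝ), -(1 / 2 : ℝ), (0 : ℝ), -(ε₄ / 2) + c) ∈ kodairaPlane ε₃ ε₄ c' :=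
    h ▸ ⟨0, 0, by simp⟩
  obtain ⟨x₁, x₂, hx⟩ := hmem
  simp only [Prod.mk.injEq] at hx
  obtain ⟨rfl, -, -, hc⟩ := hx
  linarith

lemma image_kodairaPlane_of_zpow_zero
    (hg : IsKodairaGenerators δ₁ ε₂ δ₃ ε₃ δ₄ ε₄ g₁ g₂ g₃ g₄)
    (r n t : ℤ) (c : ℝ) :
    (g₄ ^ (0 : ℤ) * g₃ ^ r * g₁ ^ n * g₂ ^ t) '' kodairaPlane ε₃ ε₄ c =
      kodairaPlane ε₃ ε₄ (c + t * ε₂ - r) := by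
  ext q
  constructor
  · rintro ⟨_, ⟨x₁, x₂, rfl⟩, rfl⟩
    refine ⟨x₁ + r, x₂ + n * δ₁ + r * x₁ + r * (r - 1) / 2 + r * δ₃, ?_⟩
    rw [kodaira_element_apply hg]
    simp only [Prod.mk.injEq]
    refine ⟨?_, ?_, ?_, ?_⟩ <;> push_cast <;> ring
  · rintro ⟨y₁, y₂, rfl⟩
    refine ⟨(y₁ - r, -(1 / 2), y₂ - (n * δ₁ + r * (y₁ - r) + r * (r - 1) / 2 + r * δ₃),
      (ε₃ + 1 / 2) * (y₁ - r) - ε₄ / 2 + c), ⟨_, _, rfl⟩, ?_⟩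
    rw [kodaira_element_apply hg]
    simp only [Prod.mk.injEq]
    refine ⟨?_, ?_, ?_, ?_⟩ <;> push_cast <;> ring

lemma zpow_eq_zero_of_image_kodairaPlane_subset
    (hg : IsKodairaGenerators δ₁ ε₂ δ₃ ε₃ δ₄ ε₄ g₁ g₂ g₃ g₄)
    {r s n t : ℤ} {c c' : ℝ}
    (h : (g₄ ^ s * g₃ ^ r * g₁ ^ n * g₂ ^ t) '' kodairaPlane ε₃ ε₄ c ⊆ kodairaPlane ε₃ ε₄ c') :
    s = 0 := by
  obtain ⟨x₁, x₂, hx⟩ := h ⟨_, ⟨0, 0, rfl⟩, rfl⟩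
  rw [kodaira_element_apply hg] at hx
  simp only [Prod.mk.injEq] at hx
  exact_mod_cast (by linarith [hx.2.1] : (s : ℝ) = 0)

lemma exists_image_kodairaPlane_eq_iff
    (hg : IsKodairaGenerators δ₁ ε₂ δ₃ ε₃ δ₄ ε₄ g₁ g₂ g₃ g₄)
    (c c' : ℝ) :
    (∃ r s n t : ℤ,
      (g₄ ^ s * g₃ ^ r * g₁ ^ n * g₂ ^ t) '' kodairaPlane ε₃ ε₄ c = kodairaPlane ε₃ ε₄ c') ↔
      ∃ t r : ℤ, c + t * ε₂ - r = c' := by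
  constructor
  · rintro ⟨r, s, n, t, h⟩
    obtain rfl := zpow_eq_zero_of_image_kodairaPlane_subset hg h.subset
    rw [image_kodairaPlane_of_zpow_zero hg] at h
    exact ⟨t, r, kodairaPlane_injective h⟩
  · rintro ⟨t, r, h⟩
    exact ⟨r, 0, 0, t, by rw [image_kodairaPlane_of_zpow_zero hg, h]⟩

end KodairaGroup

lemma intCast_mul_two_div_sub_eq_iff {m : ℤ} (hm : m ≠ 0) (t r : ℤ) :
    t * (2 / m : ℝ) - r = 2 / m / 2 ↔ 2 * t - 1 = m * r := by
  have hm' : (m : ℝ) ≠ 0 := Int.cast_ne_zero.mpr hm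
  rw [← Int.cast_inj (α := ℝ)]
  push_cast
  field_simp
  constructor <;> intro h <;> linarith

lemma exists_two_mul_sub_one_eq_mul_iff_odd (m : ℤ) : (∃ n r : ℤ, 2 * n - 1 = m * r) ↔ Odd m := by
  constructor
  · rintro ⟨n, r, h⟩
    have h_odd : Odd (m * r) := h ▸ ⟨n - 1, by ring⟩
    exact (Int.odd_mul.mp h_odd).1
  · rintro ⟨k, rfl⟩
    exact ⟨k + 1, 1, by ring⟩

theorem kodaira_Lambda_equivalence_iff_odd_general
    (m : ℤ) (hm : m ≠ 0) (δ₁ ε₂ δ₃ ε₃ δ₄ ε₄ : ℝ)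
    (hε₂ : ε₂ = 2 / (m : ℝ))
    (g₁ g₂ g₃ g₄ : Equiv.Perm (ℝ × ℝ × ℝ × ℝ))
    (hg₁ : ∀ p : ℝ × ℝ × ℝ × ℝ, g₁ p = (p.1, p.2.1, p.2.2.1 + δ₁, p.2.2.2))
    (hg₂ : ∀ p : ℝ × ℝ × ℝ × ℝ, g₂ p = (p.1, p.2.1, p.2.2.1, p.2.2.2 + ε₂))
    (hg₃ : ∀ p : ℝ × ℝ × ℝ × ℝ,
      g₃ p = (p.1 + 1, p.2.1, p.1 + p.2.2.1 + δ₃, p.2.1 + p.2.2.2 + ε₃))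
    (hg₄ : ∀ p : ℝ × ℝ × ℝ × ℝ,
      g₄ p = (p.1, p.2.1 + 1, p.2.1 + p.2.2.1 + δ₄, -p.1 + p.2.2.2 + ε₄)) :
    ((∃ r s n t : ℤ,
      (⇑(g₄ ^ s * g₃ ^ r * g₁ ^ n * g₂ ^ t)) ''
          {p : ℝ × ℝ × ℝ × ℝ | ∃ x₁ x₂ : ℝ,
            p = (x₁, -(1 / 2), x₂, (ε₃ + 1 / 2) * x₁ - ε₄ / 2)}
        = {p : ℝ × ℝ × ℝ × ℝ | ∃ x₁ x₂ : ℝ,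
            p = (x₁, -(1 / 2), x₂, (ε₃ + 1 / 2) * x₁ - ε₄ / 2 + ε₂ / 2)})
      ↔ ∃ n r : ℤ, 2 * n - 1 = m * r) ∧
    ((∃ n r : ℤ, 2 * n - 1 = m * r) ↔ Odd m) := by
  have hg : IsKodairaGenerators δ₁ ε₂ δ₃ ε₃ δ₄ ε₄ g₁ g₂ g₃ g₄ := ⟨hg₁, hg₂, hg₃, hg₄⟩
  rw [← kodairaPlane_zero]
  refine ⟨(exists_image_kodairaPlane_eq_iff hg 0 (ε₂ / 2)).trans ?_,
    exists_two_mul_sub_one_eq_mul_iff_odd m⟩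
  subst hε₂
  exact exists_congr fun t ↦ exists_congr fun r ↦ by
    rw [zero_add, intCast_mul_two_div_sub_eq_iff hm]

/-- An element of the Kodaira group maps Λ₁ onto Λ₂ iff 2n − 1 = mr is solvable
in integers, i.e. iff m is odd. -/
theorem kodaira_Lambda_equivalence_iff_odd
    (m : ℤ) (hm : m ≠ 0) (δ₁ ε₂ δ₃ ε₃ δ₄ ε₄ : ℝ) (hδ₁ : δ₁ ≠ 0)
    (hε₂ : ε₂ = 2 / (m : ℝ))
    (g₁ g₂ g₃ g₄ : Equiv.Perm (ℝ × ℝ × ℝ × ℝ))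
    (hg₁ : ∀ p : ℝ × ℝ × ℝ × ℝ, g₁ p = (p.1, p.2.1, p.2.2.1 + δ₁, p.2.2.2))
    (hg₂ : ∀ p : ℝ × ℝ × ℝ × ℝ, g₂ p = (p.1, p.2.1, p.2.2.1, p.2.2.2 + ε₂))
    (hg₃ : ∀ p : ℝ × ℝ × ℝ × ℝ,
      g₃ p = (p.1 + 1, p.2.1, p.1 + p.2.2.1 + δ₃, p.2.1 + p.2.2.2 + ε₃))
    (hg₄ : ∀ p : ℝ × ℝ × ℝ × ℝ,
      g₄ p = (p.1, p.2.1 + 1, p.2.1 + p.2.2.1 + δ₄, -p.1 + p.2.2.2 + ε₄)) :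
    ((∃ r s n t : ℤ,
      (⇑(g₄ ^ s * g₃ ^ r * g₁ ^ n * g₂ ^ t)) ''
          {p : ℝ × ℝ × ℝ × ℝ | ∃ x₁ x₂ : ℝ,
            p = (x₁, -(1 / 2), x₂, (ε₃ + 1 / 2) * x₁ - ε₄ / 2)}
        = {p : ℝ × ℝ × ℝ × ℝ | ∃ x₁ x₂ : ℝ,
            p = (x₁, -(1 / 2), x₂, (ε₃ + 1 / 2) * x₁ - ε₄ / 2 + ε₂ / 2)})
      ↔ ∃ n r : ℤ, 2 * n - 1 = m * r) ∧
    ((∃ n r : ℤ, 2 * n - 1 = m * r) ↔ Odd m) :=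
  kodaira_Lambda_equivalence_iff_odd_general m hm δ₁ ε₂ δ₃ ε₃ δ₄ ε₄ hε₂ g₁ g₂ g₃ g₄ hg₁ hg₂ hg₃ hg₄
end

section
/- Let G be a group with generators g₁,g₂,g₃,g₄ where g₁,g₂ are central and commute, [g₃,g₄] = g₂^m (m ≠ 0), and suppose σ̃ satisfies σ̃g₂σ̃⁻¹ = g₂⁻¹, σ̃g₁σ̃⁻¹ = g₁g₂^μ, and σ̃g₃σ̃⁻¹ = g₃g₂^n. Then after replacing g₃ by g₃' = g₃g₁^l g₂^t (which preserves all defining relations of G), one has σ̃g₃'σ̃⁻¹ = g₃'·g₂^{n+μl−2t}. Consequently, if μ = 1 one can always normalize to σ̃g₃'σ̃⁻¹ = g₃' (for any parity of n), while if μ = 0 one can normalize n to be 0 or 1 according to its parity. -/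
/-!
Conjugation by `σ` is an automorphism, so it multiplies `g₃ g₁^l g₂^t` by `g₂^n`, `g₂^(μl)` and
`g₂^(-2t)`, coming from `g₃`, `g₁^l` and `g₂^t ↦ g₂^(-t) = g₂^t g₂^(-2t)`. Since `g₁` and `g₂`
commute with `g₄`, multiplying `g₃` by them on the right does not change `[g₃, g₄]`. The normal
forms come from solving `n + μl - 2t ∈ {0, 1}`.
-/

section

variable {G : Type*} [Group G]

theorem conj_zpow_of_conj_eq_inv {σ z : G} (hz : σ * z * σ⁻¹ = z⁻¹) (t : ℤ) :
    σ * z ^ t * σ⁻¹ = z ^ (-t) := by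
  rw [← conj_zpow, hz, zpow_neg, inv_zpow]

theorem conj_zpow_of_conj_eq_mul_zpow {σ b z : G} {μ : ℤ} (hbz : Commute b z)
    (hb : σ * b * σ⁻¹ = b * z ^ μ) (l : ℤ) :
    σ * b ^ l * σ⁻¹ = b ^ l * z ^ (μ * l) := by
  rw [← conj_zpow, hb, (hbz.zpow_right μ).mul_zpow, ← zpow_mul]

theorem conj_mul_zpow_mul_zpow {σ a b z : G} {μ n : ℤ} (hbz : Commute b z)
    (ha : σ * a * σ⁻¹ = a * z ^ n) (hb : σ * b * σ⁻¹ = b * z ^ μ)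
    (hz : σ * z * σ⁻¹ = z⁻¹) (l t : ℤ) :
    σ * (a * b ^ l * z ^ t) * σ⁻¹ = a * b ^ l * z ^ t * z ^ (n + μ * l - 2 * t) :=
  calc σ * (a * b ^ l * z ^ t) * σ⁻¹
      = (σ * a * σ⁻¹) * (σ * b ^ l * σ⁻¹) * (σ * z ^ t * σ⁻¹) := by group
    _ = a * (z ^ n * b ^ l) * z ^ (μ * l) * z ^ (-t) := by
      rw [ha, conj_zpow_of_conj_eq_mul_zpow hbz hb, conj_zpow_of_conj_eq_inv hz]; group
    _ = a * b ^ l * z ^ t * z ^ (n + μ * l - 2 * t) := by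
      rw [← (hbz.zpow_zpow l n).eq]
      simp only [mul_assoc, ← zpow_add]
      ring_nf

theorem mul_commutator_of_commute {a b c : G} (hcb : Commute c b) :
    a * c * b * (a * c)⁻¹ * b⁻¹ = a * b * a⁻¹ * b⁻¹ :=
  calc a * c * b * (a * c)⁻¹ * b⁻¹ = a * (c * b * c⁻¹) * a⁻¹ * b⁻¹ := by group
    _ = a * b * a⁻¹ * b⁻¹ := by rw [hcb.eq, mul_inv_cancel_right]

end

theorem g₃_action_normal_form_general {G : Type*} [Group G] (g₁ g₂ g₃ g₄ σ : G)
    (m μ n : ℤ)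
    (hc12 : Commute g₁ g₂) (hc14 : Commute g₁ g₄)
    (hc24 : Commute g₂ g₄)
    (hrel : g₃ * g₄ * g₃⁻¹ * g₄⁻¹ = g₂ ^ m)
    (h2 : σ * g₂ * σ⁻¹ = g₂⁻¹)
    (h1 : σ * g₁ * σ⁻¹ = g₁ * g₂ ^ μ)
    (h3 : σ * g₃ * σ⁻¹ = g₃ * g₂ ^ n) :
    (∀ l t : ℤ, σ * (g₃ * g₁ ^ l * g₂ ^ t) * σ⁻¹
        = (g₃ * g₁ ^ l * g₂ ^ t) * g₂ ^ (n + μ * l - 2 * t)) ∧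
    (∀ l t : ℤ,
      (g₃ * g₁ ^ l * g₂ ^ t) * g₄ * (g₃ * g₁ ^ l * g₂ ^ t)⁻¹ * g₄⁻¹ = g₂ ^ m) ∧
    (μ = 1 → ∃ l t : ℤ,
      σ * (g₃ * g₁ ^ l * g₂ ^ t) * σ⁻¹ = g₃ * g₁ ^ l * g₂ ^ t) ∧
    (μ = 0 →
      (Even n → ∃ l t : ℤ,
        σ * (g₃ * g₁ ^ l * g₂ ^ t) * σ⁻¹ = g₃ * g₁ ^ l * g₂ ^ t) ∧
      (Odd n → ∃ l t : ℤ,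
        σ * (g₃ * g₁ ^ l * g₂ ^ t) * σ⁻¹ = (g₃ * g₁ ^ l * g₂ ^ t) * g₂)) := by
  have key := conj_mul_zpow_mul_zpow hc12 h3 h1 h2
  refine ⟨key, fun l t => ?_, fun hμ => ⟨-n, 0, ?_⟩, fun hμ => ⟨?_, ?_⟩⟩
  · rw [mul_assoc g₃, mul_commutator_of_commute ((hc14.zpow_left l).mul_left (hc24.zpow_left t)),
      hrel]
  · simpa [hμ] using key (-n) 0
  · rintro ⟨k, rfl⟩
    refine ⟨0, k, ?_⟩
    rw [key, hμ, show k + k + 0 * 0 - 2 * k = 0 by ring]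
    simp only [zpow_zero, mul_one]
  · rintro ⟨k, rfl⟩
    refine ⟨0, k, ?_⟩
    rw [key, hμ, show 2 * k + 1 + 0 * 0 - 2 * k = 1 by ring, zpow_one]

/-- Normalizing the conjugation action on g₃: replacing g₃ by g₃g₁^lg₂^t preserves
the relation [g₃,g₄] = g₂^m and changes the exponent n to n + μl − 2t; hence for
μ = 1 one can always normalize to σ̃g₃'σ̃⁻¹ = g₃', and for μ = 0 one can normalize
n to 0 or 1 according to its parity. -/
theorem g₃_action_normal_form {G : Type*} [Group G] (g₁ g₂ g₃ g₄ σ : G)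
    (m μ n : ℤ) (hm : m ≠ 0)
    (hc12 : Commute g₁ g₂) (hc13 : Commute g₁ g₃) (hc14 : Commute g₁ g₄)
    (hc23 : Commute g₂ g₃) (hc24 : Commute g₂ g₄)
    (hrel : g₃ * g₄ * g₃⁻¹ * g₄⁻¹ = g₂ ^ m)
    (h2 : σ * g₂ * σ⁻¹ = g₂⁻¹)
    (h1 : σ * g₁ * σ⁻¹ = g₁ * g₂ ^ μ)
    (h3 : σ * g₃ * σ⁻¹ = g₃ * g₂ ^ n) :
    (∀ l t : ℤ, σ * (g₃ * g₁ ^ l * g₂ ^ t) * σ⁻¹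
        = (g₃ * g₁ ^ l * g₂ ^ t) * g₂ ^ (n + μ * l - 2 * t)) ∧
    (∀ l t : ℤ,
      (g₃ * g₁ ^ l * g₂ ^ t) * g₄ * (g₃ * g₁ ^ l * g₂ ^ t)⁻¹ * g₄⁻¹ = g₂ ^ m) ∧
    (μ = 1 → ∃ l t : ℤ,
      σ * (g₃ * g₁ ^ l * g₂ ^ t) * σ⁻¹ = g₃ * g₁ ^ l * g₂ ^ t) ∧
    (μ = 0 →
      (Even n → ∃ l t : ℤ,
        σ * (g₃ * g₁ ^ l * g₂ ^ t) * σ⁻¹ = g₃ * g₁ ^ l * g₂ ^ t) ∧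
      (Odd n → ∃ l t : ℤ,
        σ * (g₃ * g₁ ^ l * g₂ ^ t) * σ⁻¹ = (g₃ * g₁ ^ l * g₂ ^ t) * g₂)) :=
  g₃_action_normal_form_general g₁ g₂ g₃ g₄ σ m μ n hc12 hc14 hc24 hrel h2 h1 h3
end
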